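/- If each cost C_m is convex, each utility U_n is concave, and each per-slot price pair satisfies β_t ≤ α_t, then the objective F(p_G, p_D, p_R) := Σ_{t,m} C_m(P^t_{G_m}) − Σ_{t,n} U_n(P^t_{D_n}) + G(p_R), with G the expected transaction cost, is a convex function of (p_G, p_D, p_R). -/

import Mathlib

/-!
For `β ≤ α` the per-slot transaction cost `α [y]⁺ − β [y]⁻` equals `max (α y) (β y)`, a maximum of
two linear functions, so for every realisation of the wind powers the transaction cost is a convex
function of `p_R`. Expectation preserves convexity because the integral is linear and monotone,
and the remaining terms are sums of convex functions composed with coordinate projections.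
-/

open MeasureTheory Set

section Sum

variable {𝕜 E β ι : Type*} [Semiring 𝕜] [PartialOrder 𝕜] [AddCommMonoid E] [Module 𝕜 E]
  [AddCommMonoid β] [PartialOrder β] [IsOrderedAddMonoid β] [Module 𝕜 β]
  {s : Set E} {t : Finset ι} {f : ι → E → β}

theorem convexOn_sum (hs : Convex 𝕜 s) (hf : ∀ i ∈ t, ConvexOn 𝕜 s (f i)) :
    ConvexOn 𝕜 s fun x => ∑ i ∈ t, f i x := by
  classical
  induction t using Finset.induction_on with
  | empty => simpa using convexOn_const (0 : β) hs
  | insert i t hi ih =>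
    simp only [Finset.sum_insert hi]
    exact (hf i (t.mem_insert_self i)).add (ih fun j hj => hf j (Finset.mem_insert_of_mem hj))

theorem concaveOn_sum (hs : Convex 𝕜 s) (hf : ∀ i ∈ t, ConcaveOn 𝕜 s (f i)) :
    ConcaveOn 𝕜 s fun x => ∑ i ∈ t, f i x :=
  convexOn_sum (β := βᵒᵈ) hs hf

end Sum

theorem ConvexOn.comp_linearMap_sub_const {𝕜 E F β : Type*} [Field 𝕜] [LinearOrder 𝕜]
    [AddCommGroup E] [Module 𝕜 E] [AddCommGroup F] [Module 𝕜 F]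
    [AddCommMonoid β] [PartialOrder β] [SMul 𝕜 β] {f : F → β}
    (hf : ConvexOn 𝕜 univ f) (g : E →ₗ[𝕜] F) (c : F) :
    ConvexOn 𝕜 univ fun x => f (g x - c) := by
  exact hf.comp_affineMap (g.toAffineMap - AffineMap.const 𝕜 E c)

theorem convexOn_integral {Ω E : Type*} [MeasurableSpace Ω] {μ : Measure Ω} [AddCommGroup E]
    [Module ℝ E] {s : Set E} {f : E → Ω → ℝ} (hs : Convex ℝ s)
    (hf : ∀ᵐ ω ∂μ, ConvexOn ℝ s (f · ω)) (hint : ∀ x ∈ s, Integrable (f x) μ) :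
    ConvexOn ℝ s fun x => ∫ ω, f x ω ∂μ := by
  refine ⟨hs, fun x hx y hy a b ha hb hab => ?_⟩
  have hax : Integrable (fun ω => a • f x ω) μ := (hint x hx).smul a
  have hby : Integrable (fun ω => b • f y ω) μ := (hint y hy).smul b
  calc ∫ ω, f (a • x + b • y) ω ∂μ ≤ ∫ ω, a • f x ω + b • f y ω ∂μ :=
        integral_mono_ae (hint _ (hs hx hy ha hb hab)) (hax.add hby)
          (by filter_upwards [hf] with ω hω using hω.2 hx hy ha hb hab)
    _ = a • ∫ ω, f x ω ∂μ + b • ∫ ω, f y ω ∂μ := by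
        rw [integral_add hax hby, integral_smul, integral_smul]

theorem mul_max_zero_sub_mul_neg_min_zero {a b : ℝ} (hba : b ≤ a) (y : ℝ) :
    a * max y 0 - b * -min y 0 = max (a * y) (b * y) := by
  rcases le_total y 0 with hy | hy
  · rw [max_eq_right hy, min_eq_left hy, max_eq_right (mul_le_mul_of_nonpos_right hba hy)]
    ring
  · rw [max_eq_left hy, min_eq_right hy, max_eq_left (mul_le_mul_of_nonneg_right hba hy)]
    ring

theorem convexOn_mul_max_zero_sub_mul_neg_min_zero {a b : ℝ} (hba : b ≤ a) :
    ConvexOn ℝ univ fun y : ℝ => a * max y 0 - b * -min y 0 := by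
  simp only [mul_max_zero_sub_mul_neg_min_zero hba]
  exact ((LinearMap.mulLeft ℝ a).convexOn convex_univ).sup
    ((LinearMap.mulLeft ℝ b).convexOn convex_univ)

theorem MeasureTheory.Integrable.mul_max_zero_sub_mul_neg_min_zero {Ω : Type*}
    [MeasurableSpace Ω] {μ : Measure Ω} {f : Ω → ℝ} (hf : Integrable f μ) (a b : ℝ) :
    Integrable (fun ω => a * max (f ω) 0 - b * -min (f ω) 0) μ := by
  simp only [← max_neg_neg, neg_zero]
  exact (hf.pos_part.const_mul a).sub (hf.neg_part.const_mul b)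

theorem ed_objective_convex
    {Ω : Type*} [MeasurableSpace Ω] (μ : Measure Ω) [IsProbabilityMeasure μ]
    (M N T : ℕ) (C : Fin M → ℝ → ℝ) (U : Fin N → ℝ → ℝ)
    (hC : ∀ m, ConvexOn ℝ Set.univ (C m)) (hU : ∀ n, ConcaveOn ℝ Set.univ (U n))
    (α β : Fin T → ℝ) (hαβ : ∀ t, β t ≤ α t)
    (W : Fin T → Ω → ℝ) (hW : ∀ t, Integrable (W t) μ) :
    ConvexOn ℝ Set.univ
      (fun x : (Fin M → Fin T → ℝ) × (Fin N → Fin T → ℝ) × (Fin T → ℝ) =>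
        (∑ t, ∑ m, C m (x.1 m t)) - (∑ t, ∑ n, U n (x.2.1 n t))
          + ∫ ω, (∑ t, (α t * max (x.2.2 t - W t ω) 0
              - β t * (-(min (x.2.2 t - W t ω) 0)))) ∂μ) := by
  refine ((convexOn_sum convex_univ fun t _ => convexOn_sum convex_univ fun m _ => ?_).sub
    (concaveOn_sum convex_univ fun t _ => concaveOn_sum convex_univ fun n _ => ?_)).add
    (convexOn_integral convex_univ (ae_of_all _ fun ω => ?_) fun x _ => ?_)
  · exact (hC m).comp_linearMap (LinearMap.proj (φ := fun _ => ℝ) t ∘ₗ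
      LinearMap.proj (φ := fun _ => Fin T → ℝ) m ∘ₗ LinearMap.fst ℝ _ _)
  · exact (hU n).comp_linearMap (LinearMap.proj (φ := fun _ => ℝ) t ∘ₗ
      LinearMap.proj (φ := fun _ => Fin T → ℝ) n ∘ₗ LinearMap.fst ℝ _ _ ∘ₗ LinearMap.snd ℝ _ _)
  · exact convexOn_sum convex_univ fun t _ =>
      (convexOn_mul_max_zero_sub_mul_neg_min_zero (hαβ t)).comp_linearMap_sub_const
        (LinearMap.proj (φ := fun _ => ℝ) t ∘ₗ LinearMap.snd ℝ (Fin N → Fin T → ℝ) _ ∘ₗ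
          LinearMap.snd ℝ (Fin M → Fin T → ℝ) _) (W t ω)
  · exact integrable_finsetSum _ fun t _ =>
      ((integrable_const (x.2.2 t)).sub (hW t)).mul_max_zero_sub_mul_neg_min_zero (α t) (β t)
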